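/- arXiv:1306.5883 — 2 statements merged into one kernel-verified Lean document; each statement's English description precedes it below -/
import Mathlib

section
/- Maximizing the MAP objective J₁(ω, ŝ(ω), σ̂²(ω)) + J₂(ω) = −(m+1) ln(y* Π⊥_{A(ω)} y) + Σ_i κ_i cos(ω_i − μ_i) + const over ω is equivalent to minimizing V_map(ω) = (y* Π⊥_{A(ω)} y) · exp(Re{e₂* A(ω) β}), where β_i = −κ_i e^{−jμ_i}/(m+1). That is, for any ω, ω': J(ω) ≥ J(ω') iff V_map(ω) ≤ V_map(ω'). -/
open Matrix

open Real

noncomputable def vand (m d : ℕ) (ω : Fin d → ℝ) : Matrix (Fin m) (Fin d) ℂ :=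
  Matrix.of fun t i => Complex.exp (Complex.I * (t : ℕ) * (ω i))

noncomputable def projPerp {m d : ℕ} (A : Matrix (Fin m) (Fin d) ℂ) :
    Matrix (Fin m) (Fin m) ℂ := 1 - A * (Aᴴ * A)⁻¹ * Aᴴ

/-- The residual quadratic form `y* Π⊥_{A(ω)} y` (real part). -/
noncomputable def Qres (m d : ℕ) (y : Fin m → ℂ) (ω : Fin d → ℝ) : ℝ :=
  (dotProduct (star y) ((projPerp (vand m d ω)).mulVec y)).re

/-- The MAP objective `J(ω) = -(m+1) ln(y* Π⊥ y) + Σ κᵢ cos(ωᵢ - μᵢ)`. -/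
noncomputable def Jmap (m d : ℕ) (y : Fin m → ℂ) (κ μ : Fin d → ℝ)
    (ω : Fin d → ℝ) : ℝ :=
  -(m + 1 : ℝ) * Real.log (Qres m d y ω) + ∑ i, κ i * Real.cos (ω i - μ i)

/-- The concentrated cost `V_map(ω) = (y* Π⊥ y) · exp(Re{e₂* A(ω) β})`
with `βᵢ = -κᵢ e^{-jμᵢ}/(m+1)`. -/
noncomputable def Vmap (m d : ℕ) (hm : 2 ≤ m) (y : Fin m → ℂ) (κ μ : Fin d → ℝ)
    (ω : Fin d → ℝ) : ℝ :=
  Qres m d y ω *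
    Real.exp ((((vand m d ω).mulVec
      (fun i => -(κ i : ℂ) * Complex.exp (-(Complex.I * (μ i))) / (m + 1)))
        ⟨1, by omega⟩).re)

lemma mulVec_re_eq (m d : ℕ) (hm : 2 ≤ m) (κ μ ω : Fin d → ℝ) :
    (((vand m d ω).mulVec
      (fun i => -(κ i : ℂ) * Complex.exp (-(Complex.I * (μ i))) / (m + 1)))
        ⟨1, by omega⟩).re
      = -(∑ i, κ i * Real.cos (ω i - μ i)) / (m + 1) := by
  simp only [Matrix.mulVec, dotProduct, vand, Matrix.of_apply]
  rw [Complex.re_sum]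
  rw [neg_div, Finset.sum_div, ← Finset.sum_neg_distrib]
  congr 1; ext i
  have : Complex.exp (Complex.I * (((⟨1, by omega⟩ : Fin m) : ℕ):ℂ) * (ω i)) *
      (-(κ i : ℂ) * Complex.exp (-(Complex.I * (μ i))) / (m + 1))
      = (↑(-(κ i) / (m+1)) : ℂ) * Complex.exp (((ω i - μ i : ℝ) : ℂ) * Complex.I) := by
    rw [show ((ω i - μ i : ℝ) : ℂ) * Complex.I
        = Complex.I * (((⟨1, by omega⟩ : Fin m) : ℕ):ℂ) * (ω i) + -(Complex.I * (μ i)) by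
          push_cast; ring,
      Complex.exp_add]
    push_cast
    ring
  rw [this, Complex.re_ofReal_mul, Complex.exp_ofReal_mul_I_re]
  ring

lemma jmap_eq (m d : ℕ) (hm : 2 ≤ m) (y : Fin m → ℂ) (κ μ : Fin d → ℝ)
    (hpos : ∀ ω : Fin d → ℝ, 0 < Qres m d y ω) (ω : Fin d → ℝ) :
    Jmap m d y κ μ ω = -(m + 1 : ℝ) * Real.log (Vmap m d hm y κ μ ω) := by
  unfold Jmap Vmap
  rw [Real.log_mul (hpos ω).ne' (Real.exp_pos _).ne', Real.log_exp,
    mulVec_re_eq m d hm]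
  have hm1 : (m : ℝ) + 1 ≠ 0 := by positivity
  field_simp
  ring

theorem map_equiv_vmap (m d : ℕ) (hm : 2 ≤ m) (y : Fin m → ℂ)
    (κ μ : Fin d → ℝ) (hκ : ∀ i, 0 ≤ κ i)
    (hpos : ∀ ω : Fin d → ℝ, 0 < Qres m d y ω) :
    ∀ ω ω' : Fin d → ℝ,
      Jmap m d y κ μ ω' ≤ Jmap m d y κ μ ω ↔
        Vmap m d hm y κ μ ω ≤ Vmap m d hm y κ μ ω' := by
  intro ω ω'
  have hV : ∀ ω'' : Fin d → ℝ, 0 < Vmap m d hm y κ μ ω'' := fun ω'' =>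
    mul_pos (hpos ω'') (Real.exp_pos _)
  rw [jmap_eq m d hm y κ μ hpos, jmap_eq m d hm y κ μ hpos]
  have hm1 : (0:ℝ) < (m : ℝ) + 1 := by positivity
  rw [neg_mul, neg_mul, neg_le_neg_iff, mul_le_mul_iff_right₀ hm1,
    Real.log_le_log_iff (hV ω) (hV ω')]
end

section
/- The modified Bessel function ratio I₁(κ)/I₀(κ) is strictly increasing in κ on (0, ∞), tends to 0 as κ → 0⁺, and tends to 1 as κ → ∞; hence the circular variance 1 − I₁(κ)/I₀(κ) of the von Mises distribution decreases strictly from 1 to 0. -/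
open Real Filter MeasureTheory intervalIntegral

noncomputable def Jf (g : ℝ → ℝ) (κ : ℝ) : ℝ :=
  ∫ θ in (0:ℝ)..π, Real.exp (κ * Real.cos θ) * g θ

lemma Jf_integrable (g : ℝ → ℝ) (hg : Continuous g) (κ : ℝ) :
    IntervalIntegrable (fun θ => Real.exp (κ * Real.cos θ) * g θ) volume 0 π :=
  (((Real.continuous_exp.comp ((continuous_const.mul Real.continuous_cos))).mul hg)).intervalIntegrable 0 π

lemma hasDerivAt_Jf (g : ℝ → ℝ) (hg : Continuous g) (hb : ∀ t, |g t| ≤ 1) (κ : ℝ) :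
    HasDerivAt (Jf g) (∫ θ in (0:ℝ)..π, Real.cos θ * Real.exp (κ * Real.cos θ) * g θ) κ := by
  have key := intervalIntegral.hasDerivAt_integral_of_dominated_loc_of_deriv_le
    (F := fun x θ => Real.exp (x * Real.cos θ) * g θ)
    (F' := fun x θ => Real.cos θ * Real.exp (x * Real.cos θ) * g θ)
    (x₀ := κ) (a := 0) (b := π) (μ := volume)
    (bound := fun _ => Real.exp (|κ| + 1)) (s := Metric.ball κ 1) (Metric.ball_mem_nhds κ one_pos)
    ?_ ?_ ?_ ?_ ?_ ?_
  · exact key.2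
  · exact Eventually.of_forall fun x =>
      (((Real.continuous_exp.comp (continuous_const.mul Real.continuous_cos)).mul hg)).aestronglyMeasurable
  · exact Jf_integrable g hg κ
  · exact ((Real.continuous_cos.mul
      (Real.continuous_exp.comp (continuous_const.mul Real.continuous_cos))).mul hg).aestronglyMeasurable
  · refine Eventually.of_forall fun t _ x hx => ?_
    have h1 : |Real.cos t| ≤ 1 := Real.abs_cos_le_one t
    have h2 : |g t| ≤ 1 := hb t
    have hx' : |x| < |κ| + 1 := by
      have := abs_sub_abs_le_abs_sub x κ
      have := mem_ball_iff_norm.mp hx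
      simp only [Real.norm_eq_abs] at this
      linarith
    have h3 : Real.exp (x * Real.cos t) ≤ Real.exp (|κ| + 1) := by
      apply Real.exp_le_exp.mpr
      have : x * Real.cos t ≤ |x * Real.cos t| := le_abs_self _
      rw [abs_mul] at this
      nlinarith [abs_nonneg x, abs_nonneg (Real.cos t)]
    have hexp : (0:ℝ) < Real.exp (x * Real.cos t) := Real.exp_pos _
    rw [Real.norm_eq_abs, abs_mul, abs_mul, Real.abs_exp]
    calc |Real.cos t| * Real.exp (x * Real.cos t) * |g t|
        ≤ 1 * Real.exp (x * Real.cos t) * 1 := by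
          apply mul_le_mul (mul_le_mul h1 le_rfl hexp.le (by norm_num)) h2 (abs_nonneg _)
          positivity
      _ = Real.exp (x * Real.cos t) := by ring
      _ ≤ Real.exp (|κ| + 1) := h3
  · exact intervalIntegrable_const
  · refine Eventually.of_forall fun t _ x _ => ?_
    have h : HasDerivAt (fun x : ℝ => x * Real.cos t) (Real.cos t) x := hasDerivAt_mul_const _
    have h2 := (h.exp).mul_const (g t)
    convert h2 using 1
    · rfl
    ring

lemma Jf_pos (κ : ℝ) : 0 < Jf (fun _ => 1) κ := by
  apply intervalIntegral_pos_of_pos (Jf_integrable _ continuous_const κ) _ Real.pi_pos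
  intro x; positivity


lemma var_pos (κ r : ℝ) :
    0 < ∫ θ in (0:ℝ)..π, Real.exp (κ * Real.cos θ) * (Real.cos θ - r)^2 := by
  rw [intervalIntegral.integral_of_le Real.pi_pos.le]
  rw [MeasureTheory.setIntegral_pos_iff_support_of_nonneg_ae]
  · refine lt_of_lt_of_le ?_ (measure_mono (s := Set.Ioc 0 π \ {Real.arccos r}) ?_)
    · rw [measure_diff_null (measure_singleton _)]
      simp [Real.volume_Ioc, Real.pi_pos]
    · rintro θ ⟨hmem, hne⟩
      refine ⟨?_, hmem⟩
      simp only [Function.mem_support]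
      intro h
      rcases mul_eq_zero.mp h with h | h
      · exact (Real.exp_pos _).ne' h
      · have hc : Real.cos θ = r := by nlinarith [sq_nonneg (Real.cos θ - r)]
        apply hne
        have : Real.arccos (Real.cos θ) = θ :=
          Real.arccos_cos hmem.1.le hmem.2
        simp [← hc, this]
  · exact Eventually.of_forall fun θ => by positivity
  · exact ((Real.continuous_exp.comp (continuous_const.mul Real.continuous_cos)).mul
      ((Real.continuous_cos.sub continuous_const).pow 2)).integrableOn_Ioc

lemma var_expand (κ r : ℝ) :
    ∫ θ in (0:ℝ)..π, Real.exp (κ * Real.cos θ) * (Real.cos θ - r)^2 =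
      Jf (fun θ => Real.cos θ^2) κ - 2*r*Jf Real.cos κ + r^2 * Jf (fun _ => 1) κ := by
  have h1 := Jf_integrable (fun θ => Real.cos θ^2) (Real.continuous_cos.pow 2) κ
  have h2 := Jf_integrable Real.cos Real.continuous_cos κ
  have h3 := Jf_integrable (fun _ => 1) continuous_const κ
  have heq : (fun θ => Real.exp (κ * Real.cos θ) * (Real.cos θ - r)^2) =
      fun θ => (Real.exp (κ * Real.cos θ) * Real.cos θ^2 -
        (2*r) * (Real.exp (κ * Real.cos θ) * Real.cos θ)) +
        r^2 * (Real.exp (κ * Real.cos θ) * 1) := by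
    funext θ; ring
  rw [heq, intervalIntegral.integral_add ((h1.sub (h2.const_mul _))) (h3.const_mul _),
    intervalIntegral.integral_sub h1 (h2.const_mul _),
    intervalIntegral.integral_const_mul, intervalIntegral.integral_const_mul]
  simp only [Jf, mul_one]

lemma key_ineq (κ : ℝ) :
    Jf Real.cos κ * Jf Real.cos κ < Jf (fun θ => Real.cos θ^2) κ * Jf (fun _ => 1) κ := by
  have hJ0 := Jf_pos κ
  have h := var_pos κ (Jf Real.cos κ / Jf (fun _ => 1) κ)
  rw [var_expand] at h
  have h2 := mul_pos hJ0 h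
  set J0 := Jf (fun _ => 1) κ
  set J1 := Jf Real.cos κ
  set K := Jf (fun θ => Real.cos θ^2) κ
  field_simp at h2
  nlinarith [h2, hJ0]


lemma hasDerivAt_J0 (κ : ℝ) :
    HasDerivAt (Jf (fun _ => 1)) (Jf Real.cos κ) κ := by
  have h := hasDerivAt_Jf (fun _ => 1) continuous_const (fun t => by norm_num) κ
  convert h using 1
  apply intervalIntegral.integral_congr
  intro θ _; simp [mul_comm]

lemma hasDerivAt_J1 (κ : ℝ) :
    HasDerivAt (Jf Real.cos) (Jf (fun θ => Real.cos θ^2) κ) κ := by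
  have h := hasDerivAt_Jf Real.cos Real.continuous_cos (fun t => Real.abs_cos_le_one t) κ
  convert h using 1
  apply intervalIntegral.integral_congr
  intro θ _; ring

noncomputable def R (κ : ℝ) : ℝ := Jf Real.cos κ / Jf (fun _ => 1) κ

lemma hasDerivAt_R (κ : ℝ) :
    HasDerivAt R ((Jf (fun θ => Real.cos θ^2) κ * Jf (fun _ => 1) κ -
      Jf Real.cos κ * Jf Real.cos κ) / (Jf (fun _ => 1) κ)^2) κ :=
  (hasDerivAt_J1 κ).div (hasDerivAt_J0 κ) (Jf_pos κ).ne'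

lemma R_strictMono : StrictMono R := by
  apply strictMono_of_deriv_pos
  intro x
  rw [(hasDerivAt_R x).deriv]
  exact div_pos (sub_pos.mpr (key_ineq x)) (pow_pos (Jf_pos x) 2)

lemma R_zero : R 0 = 0 := by
  have : Jf Real.cos 0 = 0 := by
    simp [Jf, integral_cos]
  simp [R, this]

lemma R_tendsto_zero : Tendsto R (nhdsWithin 0 (Set.Ioi 0)) (nhds 0) := by
  have := (hasDerivAt_R 0).continuousAt.continuousWithinAt (s := Set.Ioi 0)
  rw [ContinuousWithinAt, R_zero] at this
  exact this


lemma J0_lower (κ : ℝ) (hκ : 0 ≤ κ) (δ : ℝ) (hδ1 : 0 < δ) (hδ2 : δ ≤ π) :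
    δ * Real.exp (κ * Real.cos δ) ≤ Jf (fun _ => 1) κ := by
  have hc : Continuous fun θ : ℝ => Real.exp (κ * Real.cos θ) :=
    Real.continuous_exp.comp (continuous_const.mul Real.continuous_cos)
  have step1 : ∫ θ in (0:ℝ)..δ, Real.exp (κ * Real.cos δ) ≤
      ∫ θ in (0:ℝ)..δ, Real.exp (κ * Real.cos θ) := by
    apply intervalIntegral.integral_mono_on hδ1.le intervalIntegrable_const
      (hc.intervalIntegrable _ _)
    intro θ hθ
    apply Real.exp_le_exp.mpr
    apply mul_le_mul_of_nonneg_left _ hκ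
    exact Real.cos_le_cos_of_nonneg_of_le_pi hθ.1 hδ2 hθ.2
  have step2 : ∫ θ in (0:ℝ)..δ, Real.exp (κ * Real.cos θ) ≤ Jf (fun _ => 1) κ := by
    have : Jf (fun _ => 1) κ = ∫ θ in (0:ℝ)..π, Real.exp (κ * Real.cos θ) := by
      simp [Jf]
    rw [this]
    apply intervalIntegral.integral_mono_interval le_rfl hδ1.le hδ2
    · exact Eventually.of_forall fun θ => (Real.exp_pos _).le
    · exact hc.intervalIntegrable _ _
  have : ∫ θ in (0:ℝ)..δ, Real.exp (κ * Real.cos δ) = δ * Real.exp (κ * Real.cos δ) := by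
    simp
  linarith

lemma J1_le_J0 (κ : ℝ) : Jf Real.cos κ ≤ Jf (fun _ => 1) κ := by
  apply intervalIntegral.integral_mono_on Real.pi_pos.le
    (Jf_integrable _ Real.continuous_cos κ) (Jf_integrable _ continuous_const κ)
  intro θ _
  have := Real.cos_le_one θ
  nlinarith [Real.exp_pos (κ * Real.cos θ)]

lemma diff_upper (κ : ℝ) (hκ : 0 ≤ κ) (δ : ℝ) (hδ1 : 0 < δ) (hδ2 : δ ≤ π) :
    Jf (fun _ => 1) κ - Jf Real.cos κ ≤
      (1 - Real.cos δ) * Jf (fun _ => 1) κ + 2*π*Real.exp (κ * Real.cos δ) := by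
  have hc : Continuous fun θ : ℝ => Real.exp (κ * Real.cos θ) * (1 - Real.cos θ) :=
    (Real.continuous_exp.comp (continuous_const.mul Real.continuous_cos)).mul
      (continuous_const.sub Real.continuous_cos)
  have hdiff : Jf (fun _ => 1) κ - Jf Real.cos κ =
      ∫ θ in (0:ℝ)..π, Real.exp (κ * Real.cos θ) * (1 - Real.cos θ) := by
    rw [Jf, Jf, ← intervalIntegral.integral_sub (Jf_integrable _ continuous_const κ)
      (Jf_integrable _ Real.continuous_cos κ)]
    apply intervalIntegral.integral_congr
    intro θ _; ring
  have hsplit : ∫ θ in (0:ℝ)..π, Real.exp (κ * Real.cos θ) * (1 - Real.cos θ) =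
      (∫ θ in (0:ℝ)..δ, Real.exp (κ * Real.cos θ) * (1 - Real.cos θ)) +
      ∫ θ in δ..π, Real.exp (κ * Real.cos θ) * (1 - Real.cos θ) :=
    (intervalIntegral.integral_add_adjacent_intervals (hc.intervalIntegrable _ _)
      (hc.intervalIntegrable _ _)).symm
  have hpart1 : (∫ θ in (0:ℝ)..δ, Real.exp (κ * Real.cos θ) * (1 - Real.cos θ)) ≤
      (1 - Real.cos δ) * Jf (fun _ => 1) κ := by
    have h1 : (∫ θ in (0:ℝ)..δ, Real.exp (κ * Real.cos θ) * (1 - Real.cos θ)) ≤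
        ∫ θ in (0:ℝ)..δ, (1 - Real.cos δ) * Real.exp (κ * Real.cos θ) := by
      apply intervalIntegral.integral_mono_on hδ1.le (hc.intervalIntegrable _ _)
        ((continuous_const.mul (Real.continuous_exp.comp (continuous_const.mul
          Real.continuous_cos))).intervalIntegrable _ _)
      intro θ hθ
      have hcc : Real.cos δ ≤ Real.cos θ :=
        Real.cos_le_cos_of_nonneg_of_le_pi hθ.1 hδ2 hθ.2
      simp only [Pi.mul_apply, Function.comp_apply]
      nlinarith [Real.exp_pos (κ * Real.cos θ)]
    have h2 : (∫ θ in (0:ℝ)..δ, (1 - Real.cos δ) * Real.exp (κ * Real.cos θ)) ≤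
        (1 - Real.cos δ) * Jf (fun _ => 1) κ := by
      rw [intervalIntegral.integral_const_mul]
      apply mul_le_mul_of_nonneg_left _ (by nlinarith [Real.cos_le_one δ])
      have : Jf (fun _ => 1) κ = ∫ θ in (0:ℝ)..π, Real.exp (κ * Real.cos θ) := by
        simp [Jf]
      rw [this]
      apply intervalIntegral.integral_mono_interval le_rfl hδ1.le hδ2
      · exact Eventually.of_forall fun θ => (Real.exp_pos _).le
      · exact (Real.continuous_exp.comp
          (continuous_const.mul Real.continuous_cos)).intervalIntegrable _ _
    linarith
  have hpart2 : (∫ θ in δ..π, Real.exp (κ * Real.cos θ) * (1 - Real.cos θ)) ≤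
      2*π*Real.exp (κ * Real.cos δ) := by
    have h1 : (∫ θ in δ..π, Real.exp (κ * Real.cos θ) * (1 - Real.cos θ)) ≤
        ∫ θ in δ..π, 2 * Real.exp (κ * Real.cos δ) := by
      apply intervalIntegral.integral_mono_on hδ2 (hc.intervalIntegrable _ _)
        intervalIntegrable_const
      intro θ hθ
      have hcc : Real.cos θ ≤ Real.cos δ :=
        Real.cos_le_cos_of_nonneg_of_le_pi hδ1.le hθ.2 hθ.1
      have he : Real.exp (κ * Real.cos θ) ≤ Real.exp (κ * Real.cos δ) :=
        Real.exp_le_exp.mpr (mul_le_mul_of_nonneg_left hcc hκ)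
      nlinarith [Real.exp_pos (κ * Real.cos θ), Real.neg_one_le_cos θ,
        Real.exp_pos (κ * Real.cos δ)]
    have h2 : (∫ θ in δ..π, (2:ℝ) * Real.exp (κ * Real.cos δ)) ≤
        2*π*Real.exp (κ * Real.cos δ) := by
      rw [intervalIntegral.integral_const]
      have := Real.exp_pos (κ * Real.cos δ)
      have : (π - δ) * (2 * Real.exp (κ * Real.cos δ)) ≤
          2*π*Real.exp (κ * Real.cos δ) := by nlinarith [Real.exp_pos (κ * Real.cos δ)]
      simpa [smul_eq_mul] using this
    linarith
  rw [hdiff, hsplit]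
  linarith


lemma one_sub_R_tendsto : Tendsto (fun κ => 1 - R κ) atTop (nhds 0) := by
  rw [Metric.tendsto_atTop]
  intro ε hε
  obtain ⟨δ, hδε, hδπ, hδ0⟩ : ∃ δ : ℝ, 1 - Real.cos δ < ε/2 ∧ δ < π ∧ 0 < δ := by
    have h1 : Tendsto (fun δ : ℝ => 1 - Real.cos δ) (nhdsWithin 0 (Set.Ioi 0)) (nhds 0) := by
      have hcont : Continuous fun δ : ℝ => 1 - Real.cos δ := by continuity
      have := (hcont.tendsto 0).mono_left
        (nhdsWithin_le_nhds (s := Set.Ioi (0:ℝ)))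
      simpa using this
    have h2 : ∀ᶠ δ in nhdsWithin (0:ℝ) (Set.Ioi 0), 1 - Real.cos δ < ε/2 :=
      h1.eventually_lt_const (half_pos hε)
    have h3 : ∀ᶠ δ in nhdsWithin (0:ℝ) (Set.Ioi 0), δ < π :=
      (eventually_lt_nhds Real.pi_pos).filter_mono nhdsWithin_le_nhds
    have h4 : ∀ᶠ δ in nhdsWithin (0:ℝ) (Set.Ioi 0), 0 < δ := eventually_mem_nhdsWithin
    exact (h2.and (h3.and h4)).exists
  set c := Real.cos δ - Real.cos (δ/2) with hc
  have hcneg : c < 0 := by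
    have := Real.cos_lt_cos_of_nonneg_of_le_pi (by linarith : (0:ℝ) ≤ δ/2)
      hδπ.le (by linarith : δ/2 < δ)
    simp only [hc]; linarith
  have hterm : Tendsto (fun κ : ℝ => (4*π/δ) * Real.exp (κ * c)) atTop (nhds 0) := by
    have h5 : Tendsto (fun κ : ℝ => κ * c) atTop atBot := tendsto_id.atTop_mul_neg hcneg tendsto_const_nhds
    have h6 := Real.tendsto_exp_atBot.comp h5
    have h7 := h6.const_mul (4*π/δ)
    simpa using h7
  obtain ⟨N, hN⟩ := eventually_atTop.mp (hterm.eventually_lt_const (half_pos hε))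
  refine ⟨max N 0, fun κ hκ => ?_⟩
  have hκ0 : (0:ℝ) ≤ κ := le_trans (le_max_right _ _) hκ
  have hκN : N ≤ κ := le_trans (le_max_left _ _) hκ
  have hJ0 := Jf_pos κ
  have hup := diff_upper κ hκ0 δ hδ0 hδπ.le
  have hlow := J0_lower κ hκ0 (δ/2) (by linarith) (by linarith)
  have hRle : R κ ≤ 1 := by rw [R, div_le_one hJ0]; exact J1_le_J0 κ
  have h1R : 1 - R κ = (Jf (fun _ => 1) κ - Jf Real.cos κ) / Jf (fun _ => 1) κ := by
    rw [R]; field_simp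
  have hb : (Jf (fun _ => 1) κ - Jf Real.cos κ) / Jf (fun _ => 1) κ ≤
      (1 - Real.cos δ) + (4*π/δ) * Real.exp (κ*c) := by
    rw [div_le_iff₀ hJ0]
    have e1 : Real.exp (κ*c) * Real.exp (κ * Real.cos (δ/2)) = Real.exp (κ * Real.cos δ) := by
      rw [← Real.exp_add]; congr 1; simp only [hc]; ring
    have h2' : (4*π/δ) * Real.exp (κ*c) * ((δ/2) * Real.exp (κ * Real.cos (δ/2))) =
        2*π*Real.exp (κ * Real.cos δ) := by
      rw [← e1]; field_simp; ring
    have hkey : 2*π*Real.exp (κ * Real.cos δ) ≤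
        (4*π/δ) * Real.exp (κ*c) * Jf (fun _ => 1) κ := by
      rw [← h2']
      apply mul_le_mul_of_nonneg_left hlow
      positivity
    nlinarith [hup, hkey, hJ0, Real.cos_le_one δ]
  have habs : dist (1 - R κ) 0 = 1 - R κ := by
    rw [Real.dist_eq, sub_zero, abs_of_nonneg (by linarith)]
  rw [habs, h1R]
  have := hN κ hκN
  linarith

lemma R_tendsto_one : Tendsto R atTop (nhds 1) := by
  have h := tendsto_const_nhds (x := (1:ℝ)) (f := atTop).sub one_sub_R_tendsto
  simp only [sub_sub_cancel, sub_zero] at h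
  exact h


noncomputable def besselI (ℓ : ℕ) (κ : ℝ) : ℝ :=
  (1 / π) * ∫ θ in (0:ℝ)..π, Real.exp (κ * Real.cos θ) * Real.cos (ℓ * θ)

lemma ratio_eq (κ : ℝ) : besselI 1 κ / besselI 0 κ = R κ := by
  simp only [besselI, R, Jf, Nat.cast_one, one_mul, Nat.cast_zero, zero_mul,
    Real.cos_zero, mul_one]
  rw [mul_div_mul_left _ _ (by positivity : (1:ℝ)/π ≠ 0)]

theorem bessel_ratio_monotone :
    StrictMonoOn (fun κ => besselI 1 κ / besselI 0 κ) (Set.Ioi (0 : ℝ)) ∧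
    Tendsto (fun κ => besselI 1 κ / besselI 0 κ) (nhdsWithin 0 (Set.Ioi 0)) (nhds 0) ∧
    Tendsto (fun κ => besselI 1 κ / besselI 0 κ) atTop (nhds 1) ∧
    StrictAntiOn (fun κ => 1 - besselI 1 κ / besselI 0 κ) (Set.Ioi (0 : ℝ)) ∧
    Tendsto (fun κ => 1 - besselI 1 κ / besselI 0 κ) (nhdsWithin 0 (Set.Ioi 0)) (nhds 1) ∧
    Tendsto (fun κ => 1 - besselI 1 κ / besselI 0 κ) atTop (nhds 0) := by
  simp only [ratio_eq]
  refine ⟨R_strictMono.strictMonoOn _, R_tendsto_zero, R_tendsto_one, ?_, ?_, ?_⟩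
  · intro x hx y hy hxy
    have := R_strictMono hxy
    simp only [ratio_eq]
    linarith
  · have h := (tendsto_const_nhds (x := (1:ℝ))
      (f := nhdsWithin (0:ℝ) (Set.Ioi 0))).sub R_tendsto_zero
    simpa using h
  · simpa using one_sub_R_tendsto
end
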